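/- Let α > 1, ε ≥ 0, and let M be a mechanism from D^n to probability distributions on R satisfying the single-step Rényi-DP consequence: for every pair of neighboring datasets d̃, d̃' and every event E ⊆ R, Pr[M(d̃) ∈ E] ≤ e^{ε(1−1/α)}·(Pr[M(d̃') ∈ E])^{1−1/α}. Let d, d' be datasets with Hamming distance |d−d'|_H = Δ and suppose α ≥ Δ+1. If E ⊆ R is an event with Pr[M(d) ∈ E] ≥ 1/4, then Pr[M(d') ∈ E] ≥ e^{−e(α−1)ε}/44. -/

import Mathlib

open MeasureTheory
open scoped ENNReal

/-!
Walking from `d` to `d'` through `Δ` neighbouring datasets and applying the one-step bound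
(weakened to the constant `e^ε`) at each step gives
`Pr[M(d) ∈ E] ≤ e^{εΔ} · Pr[M(d') ∈ E]^{c^Δ}` with `c = 1 - 1/α`. Since
`log c ≥ -1/(α-1)` and `Δ ≤ α - 1`, the exponent satisfies `c^{-Δ} ≤ e`; raising
`e^{-εΔ}/4 ≤ Pr[M(d') ∈ E]^{c^Δ}` to the power `c^{-Δ}` and using `4^e ≤ 44` gives the bound.
-/

section Hamming

variable {ι : Type*} [Fintype ι] [DecidableEq ι] {β : ι → Type*} [∀ i, DecidableEq (β i)]

theorem exists_hammingDist_eq_one_of_hammingDist_eq_succ {x y : ∀ i, β i} {k : ℕ}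
    (h : hammingDist x y = k + 1) : ∃ z, hammingDist x z = 1 ∧ hammingDist z y = k := by
  obtain ⟨i, hi⟩ := Function.ne_iff.mp (hammingDist_ne_zero.mp (by omega : hammingDist x y ≠ 0))
  refine ⟨Function.update x i (y i), ?_, ?_⟩
  · have : ({j | x j ≠ Function.update x i (y i) j} : Finset ι) = {i} := by
      ext j; by_cases hj : j = i <;> simp [hj, hi]
    rw [hammingDist, this, Finset.card_singleton]
  · have : ({j | Function.update x i (y i) j ≠ y j} : Finset ι) =
        ({j | x j ≠ y j} : Finset ι).erase i := by
      ext j; by_cases hj : j = i <;> simp [hj]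
    rw [hammingDist, this, Finset.card_erase_of_mem (by simpa using hi)]
    exact Nat.sub_eq_of_eq_add h

theorem le_pow_mul_rpow_of_hammingDist_eq (P : (∀ i, β i) → ℝ≥0∞) {C : ℝ≥0∞} {c : ℝ}
    (hC : 1 ≤ C) (hc₀ : 0 ≤ c) (hc₁ : c ≤ 1)
    (hstep : ∀ x y, hammingDist x y = 1 → P x ≤ C * P y ^ c) :
    ∀ (k : ℕ) (x y : ∀ i, β i), hammingDist x y = k → P x ≤ C ^ k * P y ^ c ^ k := by
  intro k
  induction k with
  | zero =>
    intro x y h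
    simp [hammingDist_eq_zero.mp h]
  | succ k ih =>
    intro x y h
    obtain ⟨z, hxz, hzy⟩ := exists_hammingDist_eq_one_of_hammingDist_eq_succ h
    calc P x ≤ C * P z ^ c := hstep x z hxz
      _ ≤ C * (C ^ k * P y ^ c ^ k) ^ c := by gcongr; exact ih z y hzy
      _ = C * (C ^ k) ^ c * P y ^ c ^ (k + 1) := by
        rw [ENNReal.mul_rpow_of_nonneg _ _ hc₀, ← ENNReal.rpow_mul, pow_succ, mul_assoc]
      _ ≤ C * C ^ k * P y ^ c ^ (k + 1) := by
        gcongr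
        calc (C ^ k) ^ c ≤ (C ^ k) ^ (1 : ℝ) :=
              ENNReal.rpow_le_rpow_of_exponent_le (one_le_pow₀ hC) hc₁
          _ = C ^ k := ENNReal.rpow_one _
      _ = C ^ (k + 1) * P y ^ c ^ (k + 1) := by rw [← pow_succ']

end Hamming

theorem Real.exp_neg_one_le_one_sub_inv_pow {α : ℝ} {k : ℕ} (hα : 1 < α)
    (hk : (k : ℝ) + 1 ≤ α) :
    Real.exp (-1) ≤ (1 - 1 / α) ^ k := by
  have hc : 0 < 1 - 1 / α := by
    have : 1 / α < 1 := (div_lt_one (by linarith)).mpr hα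
    linarith
  have hlog : -1 / (α - 1) ≤ Real.log (1 - 1 / α) := by
    refine le_trans (le_of_eq ?_) (Real.one_sub_inv_le_log_of_pos hc)
    have : α - 1 ≠ 0 := by linarith
    field_simp
    ring
  rw [← Real.exp_log (pow_pos hc k), Real.exp_le_exp, Real.log_pow]
  calc (-1 : ℝ) ≤ k * (-1 / (α - 1)) := by
        rw [mul_div_assoc', le_div_iff₀ (by linarith)]; linarith
    _ ≤ k * Real.log (1 - 1 / α) := by gcongr

-- `4 ^ e ≈ 43.4`, so `e` is replaced by `68/25` and `4 ^ 68 ≤ 44 ^ 25` is checked numerically.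
theorem Real.four_rpow_exp_one_le : (4 : ℝ) ^ Real.exp 1 ≤ 44 := by
  have he : Real.exp 1 ≤ 68 / 25 := by linarith [Real.exp_one_lt_d9]
  calc (4 : ℝ) ^ Real.exp 1 ≤ 4 ^ (68 / 25 : ℝ) := by gcongr; norm_num
    _ ≤ 44 := by
      refine le_of_pow_le_pow_left₀ (n := 25) (by norm_num) (by norm_num) ?_
      rw [← Real.rpow_natCast, ← Real.rpow_mul (by norm_num)]
      norm_num

theorem Real.rpow_le_of_le_rpow {a q r s : ℝ} (ha₀ : 0 < a) (ha₁ : a ≤ 1) (hq : 0 ≤ q)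
    (hr : 0 < r) (hrs : r⁻¹ ≤ s) (h : a ≤ q ^ r) : a ^ s ≤ q :=
  calc a ^ s ≤ a ^ r⁻¹ := Real.rpow_le_rpow_of_exponent_ge ha₀ ha₁ hrs
    _ ≤ (q ^ r) ^ r⁻¹ := by gcongr
    _ = q := Real.rpow_rpow_inv hq hr.ne'

theorem Real.exp_neg_mul_div_le_rpow {x y : ℝ} (hxy : x ≤ y) :
    Real.exp (-(Real.exp 1 * y)) / 44 ≤ (Real.exp (-x) / 4) ^ Real.exp 1 := by
  rw [Real.div_rpow (Real.exp_pos _).le (by norm_num), ← Real.exp_mul]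
  refine div_le_div₀ (Real.exp_pos _).le ?_ (by positivity) Real.four_rpow_exp_one_le
  rw [Real.exp_le_exp]
  nlinarith [Real.exp_pos 1]

theorem Real.exp_neg_mul_div_le_of_le_exp_mul_rpow {x y q r : ℝ} (hx : 0 ≤ x) (hxy : x ≤ y)
    (hq : 0 ≤ q) (hr : 0 < r) (hre : r⁻¹ ≤ Real.exp 1) (h : 1 / 4 ≤ Real.exp x * q ^ r) :
    Real.exp (-(Real.exp 1 * y)) / 44 ≤ q := by
  have hbase : Real.exp (-x) / 4 ≤ q ^ r :=
    calc Real.exp (-x) / 4 = Real.exp (-x) * (1 / 4) := by ring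
      _ ≤ Real.exp (-x) * (Real.exp x * q ^ r) := by gcongr
      _ = q ^ r := by rw [← mul_assoc, ← Real.exp_add, neg_add_cancel, Real.exp_zero, one_mul]
  have hle : Real.exp (-x) / 4 ≤ 1 := by
    have := Real.exp_le_one_iff.mpr (neg_nonpos.mpr hx)
    linarith
  exact (Real.exp_neg_mul_div_le_rpow hxy).trans
    (Real.rpow_le_of_le_rpow (by positivity) hle hq hr hre hbase)

/-- group privacy for Rényi DP, Proposition 2.4, third part.
Under the single-step Rényi-DP consequence, for datasets at Hamming distance `Δ` with
`α ≥ Δ + 1`, if `Pr[M(d) ∈ E] ≥ 1/4` then `Pr[M(d') ∈ E] ≥ e^{-e(α-1)ε}/44`. -/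
theorem stmt_5 {D R : Type*} [DecidableEq D] [MeasurableSpace R] {n : ℕ}
    (M : (Fin n → D) → Measure R)
    (hprob : ∀ d, IsProbabilityMeasure (M d))
    (α ε : ℝ) (hα : 1 < α) (hε : 0 ≤ ε)
    (hRDP : ∀ d d' : Fin n → D, hammingDist d d' = 1 →
      ∀ E : Set R, M d E ≤ ENNReal.ofReal (Real.exp (ε * (1 - 1/α))) * (M d' E) ^ (1 - 1/α))
    (Δ : ℕ) (d d' : Fin n → D) (hdist : hammingDist d d' = Δ)
    (hαΔ : (Δ : ℝ) + 1 ≤ α) :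
    ∀ E : Set R, (1 : ℝ≥0∞) / 4 ≤ M d E →
      ENNReal.ofReal (Real.exp (-(Real.exp 1 * (α - 1) * ε)) / 44) ≤ M d' E := by
  intro E hE
  set c := 1 - 1 / α
  have hc₀ : 0 < c := by
    have : 1 / α < 1 := (div_lt_one (by linarith)).mpr hα
    linarith
  have hc₁ : c ≤ 1 := by
    have : 0 ≤ 1 / α := by positivity
    linarith
  have hstep (x y : Fin n → D) (h : hammingDist x y = 1) :
      M x E ≤ ENNReal.ofReal (Real.exp ε) * M y E ^ c :=
    (hRDP x y h E).trans (by gcongr; nlinarith)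
  have hchain := le_pow_mul_rpow_of_hammingDist_eq (fun x => M x E)
    (ENNReal.one_le_ofReal.mpr (Real.one_le_exp hε)) hc₀.le hc₁ hstep Δ d d' hdist
  have hreal := ENNReal.toReal_mono (by finiteness) (hE.trans hchain)
  rw [ENNReal.toReal_mul, ENNReal.toReal_pow, ENNReal.toReal_ofReal (Real.exp_pos _).le,
    ← ENNReal.toReal_rpow, ← Real.exp_nat_mul] at hreal
  have hr : (c ^ Δ)⁻¹ ≤ Real.exp 1 := by
    rw [inv_le_comm₀ (by positivity) (Real.exp_pos 1), ← Real.exp_neg]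
    exact Real.exp_neg_one_le_one_sub_inv_pow hα hαΔ
  rw [mul_assoc, ← ENNReal.ofReal_toReal (measure_ne_top (M d') E)]
  refine ENNReal.ofReal_le_ofReal (Real.exp_neg_mul_div_le_of_le_exp_mul_rpow (x := Δ * ε)
    (by positivity) ?_ ENNReal.toReal_nonneg (by positivity) hr (by simpa using hreal))
  nlinarith
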